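/- arXiv:1904.01146 — 2 statements merged into one kernel-verified Lean document; each statement's English description precedes it below -/
import Mathlib

section
/- Let L = L(q; s_1,...,s_n) with gcd(q, s_j) = 1 for all j, let N_L(k) be the number of lattice points of one-norm k, and θ_L(z) = ∑_{k≥0} N_L(k) z^k. Then the spectral generating function F_L(z) = (1−z^2)/q · ∑_{l=0}^{q-1} ∏_{j=1}^n 1/((1−ξ_q^{l s_j} z)(1−ξ_q^{−l s_j} z)) satisfies F_L(z) = θ_L(z)/(1−z^2)^{n−1}, as formal power series. -/
/-- `N_L(k)`: the number of points of the congruence lattice `L(q; s₁, …, s_n)` with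
one-norm equal to `k`. -/
noncomputable def latticeCount (n q : ℕ) (s : Fin n → ℤ) (k : ℕ) : ℕ :=
  Nat.card {a : Fin n → ℤ // ((q : ℤ) ∣ ∑ i, a i * s i) ∧ ∑ i, (a i).natAbs = k}

/-! Each factor `(1 - z²) / ((1 - w z)(1 - w⁻¹ z))` with `‖w‖ = 1` is the two-sided series
`∑_{a ∈ ℤ} w^a z^|a|`, so for `w_j = ξ^{l s_j}` the product over `j` is the absolutely convergent
sum over `a ∈ ℤⁿ` of `ξ^{l ⟨a, s⟩} z^{‖a‖₁}`. Averaging over `l < q`, orthogonality of the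
characters `l ↦ ξ^{l m}` keeps exactly the `a` with `q ∣ ⟨a, s⟩`, i.e. the points of `L`, and
grouping these by one-norm gives `θ_L(z)`. -/

open Finset

theorem Finset.prod_zpow_eq_zpow_sum₀ {ι G₀ : Type*} [CommGroupWithZero G₀] {a : G₀} (ha : a ≠ 0)
    (s : Finset ι) (f : ι → ℤ) : ∏ i ∈ s, a ^ f i = a ^ ∑ i ∈ s, f i := by
  induction s using Finset.cons_induction with
  | empty => simp
  | cons i s hi ih => rw [prod_cons, sum_cons, ih, zpow_add₀ ha]

theorem IsPrimitiveRoot.sum_range_zpow_mul {K : Type*} [Field K] {ξ : K} {q : ℕ}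
    (hξ : IsPrimitiveRoot ξ q) (m : ℤ) :
    ∑ l ∈ range q, ξ ^ ((l : ℤ) * m) = if (q : ℤ) ∣ m then (q : K) else 0 := by
  simp_rw [mul_comm _ m, zpow_mul, zpow_natCast]
  split_ifs with hm
  · simp [(hξ.zpow_eq_one_iff_dvd m).mpr hm]
  · have hξm : (ξ ^ m) ^ q = 1 := by
      rw [← zpow_natCast, ← zpow_mul, mul_comm, zpow_mul, zpow_natCast, hξ.pow_eq_one, one_zpow]
    rw [geom_sum_eq (mt (hξ.zpow_eq_one_iff_dvd m).mp hm), hξm, sub_self, zero_div]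

section NormedField

variable {𝕜 : Type*} [NormedField 𝕜]

theorem hasSum_zpow_mul_pow_natAbs {w z : 𝕜} (hw : ‖w‖ = 1) (hz : ‖z‖ < 1) :
    HasSum (fun a : ℤ => w ^ a * z ^ a.natAbs)
      ((1 - z ^ 2) * ((1 - w * z) * (1 - w⁻¹ * z))⁻¹) := by
  have hw₀ : w ≠ 0 := norm_ne_zero_iff.mp (by rw [hw]; exact one_ne_zero)
  have hwz : ‖w * z‖ < 1 := by rwa [norm_mul, hw, one_mul]
  have hwz' : ‖w⁻¹ * z‖ < 1 := by rwa [norm_mul, norm_inv, hw, inv_one, one_mul]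
  have h₁ : (1 : 𝕜) - z * w ≠ 0 := by
    rw [mul_comm]; exact sub_ne_zero.mpr fun h => by simp [← h] at hwz
  have h₂ : w - z ≠ 0 := sub_ne_zero.mpr fun h => by simp [← h, hw₀] at hwz'
  have hsum : (1 - z ^ 2) * ((1 - w * z) * (1 - w⁻¹ * z))⁻¹ =
      (1 - w * z)⁻¹ + w⁻¹ * z * (1 - w⁻¹ * z)⁻¹ := by
    field_simp
    ring
  rw [hsum]
  apply HasSum.of_nat_of_neg_add_one
  · simpa [mul_pow] using hasSum_geometric_of_norm_lt_one hwz
  · have h := (hasSum_geometric_of_norm_lt_one hwz').mul_left (w⁻¹ * z)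
    simp_rw [← pow_succ', mul_pow, inv_pow] at h
    simpa [zpow_neg, ← Int.natCast_succ, -Nat.cast_add, -Int.natCast_add] using h

theorem summable_norm_zpow_mul_pow_natAbs {w z : 𝕜} (hw : ‖w‖ = 1) (hz : ‖z‖ < 1) :
    Summable fun a : ℤ => ‖w ^ a * z ^ a.natAbs‖ := by
  simp only [norm_mul, norm_zpow, hw, one_zpow, one_mul, norm_pow]
  have h := summable_geometric_of_lt_one (norm_nonneg z) hz
  exact .of_nat_of_neg_add_one h (((summable_nat_add_iff 1).mpr h).congr fun _ => rfl)

theorem summable_norm_pi_fin_prod {α : Type*} {n : ℕ} {f : Fin n → α → 𝕜}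
    (hf : ∀ j, Summable fun a => ‖f j a‖) :
    Summable fun a : Fin n → α => ‖∏ j, f j (a j)‖ := by
  induction n with
  | zero => exact .of_finite
  | succ n ih =>
    rw [← (Fin.consEquiv fun _ => α).summable_iff]
    simpa [Function.comp_def, Fin.consEquiv, Fin.prod_univ_succ] using
      (hf 0).mul_norm (ih fun j => hf j.succ)

theorem hasSum_pi_fin_prod [CompleteSpace 𝕜] {α : Type*} {n : ℕ} {f : Fin n → α → 𝕜}
    {S : Fin n → 𝕜} (hf : ∀ j, HasSum (f j) (S j)) (hf' : ∀ j, Summable fun a => ‖f j a‖) :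
    HasSum (fun a : Fin n → α => ∏ j, f j (a j)) (∏ j, S j) := by
  induction n with
  | zero => simp
  | succ n ih =>
    have hcons : (fun a : Fin (n + 1) → α => ∏ j, f j (a j)) ∘ Fin.consEquiv (fun _ => α) =
        fun p => f 0 p.1 * ∏ j : Fin n, f j.succ (p.2 j) := by
      funext p
      simp [Fin.consEquiv, Fin.prod_univ_succ]
    rw [← (Fin.consEquiv fun _ => α).hasSum_iff, hcons, Fin.prod_univ_succ]
    have htail := ih (fun j => hf j.succ) fun j => hf' j.succ
    have htail' := summable_norm_pi_fin_prod (f := fun j => f j.succ) fun j => hf' j.succ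
    have hs := summable_mul_of_summable_norm (hf' 0) htail'
    have hmul := (hf 0).mul htail hs
    exact hmul

theorem HasSum.eq_tsum_latticeCount_mul_pow [CompleteSpace 𝕜] {n q : ℕ} {s : Fin n → ℤ}
    {z θ : 𝕜}
    (h : HasSum (fun a : Fin n → ℤ =>
      if (q : ℤ) ∣ ∑ i, a i * s i then z ^ ∑ i, (a i).natAbs else 0) θ) :
    θ = ∑' k : ℕ, (latticeCount n q s k : 𝕜) * z ^ k := by
  refine ((h.tsum_fiberwise fun a => ∑ i, (a i).natAbs).tsum_eq.symm).trans
    (tsum_congr fun k => ?_)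
  have hfiber : ((fun a : Fin n → ℤ => ∑ i, (a i).natAbs) ⁻¹' {k}).indicator (fun a =>
      if (q : ℤ) ∣ ∑ i, a i * s i then z ^ ∑ i, (a i).natAbs else 0) =
      {a | (q : ℤ) ∣ ∑ i, a i * s i ∧ ∑ i, (a i).natAbs = k}.indicator fun _ => z ^ k := by
    ext a
    by_cases hk : ∑ i, (a i).natAbs = k <;> by_cases hq : (q : ℤ) ∣ ∑ i, a i * s i <;>
      simp [Set.indicator, hk, hq]
  rw [_root_.tsum_subtype _ (fun a : Fin n → ℤ =>
      if (q : ℤ) ∣ ∑ i, a i * s i then z ^ ∑ i, (a i).natAbs else 0), hfiber,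
    ← _root_.tsum_subtype, tsum_const, nsmul_eq_mul]
  rfl

theorem hasSum_zpow_mul_sum_mul_pow_sum_natAbs [CompleteSpace 𝕜] {ξ z : 𝕜} (hξ : ‖ξ‖ = 1)
    (hz : ‖z‖ < 1) {n : ℕ} (s : Fin n → ℤ) (m : ℤ) :
    HasSum (fun a : Fin n → ℤ => ξ ^ (m * ∑ i, a i * s i) * z ^ ∑ i, (a i).natAbs)
      ((1 - z ^ 2) ^ n * ∏ j, ((1 - ξ ^ (m * s j) * z) * (1 - ξ ^ (-(m * s j)) * z))⁻¹) := by
  have hξ₀ : ξ ≠ 0 := norm_ne_zero_iff.mp (by rw [hξ]; exact one_ne_zero)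
  have hw : ∀ j, ‖ξ ^ (m * s j)‖ = 1 := fun j => by rw [norm_zpow, hξ, one_zpow]
  have h := hasSum_pi_fin_prod (fun j => hasSum_zpow_mul_pow_natAbs (hw j) hz)
    (fun j => summable_norm_zpow_mul_pow_natAbs (hw j) hz)
  rw [prod_mul_distrib, prod_const, card_univ, Fintype.card_fin] at h
  simp_rw [zpow_neg]
  refine h.congr_fun fun a => ?_
  rw [prod_mul_distrib, prod_pow_eq_pow_sum]
  simp_rw [← zpow_mul]
  rw [prod_zpow_eq_zpow_sum₀ hξ₀, mul_sum]
  simp_rw [mul_assoc, mul_comm (s _)]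

end NormedField

theorem stmt_11_general (n q : ℕ) (hn : 1 ≤ n) (hq : 1 ≤ q) (s : Fin n → ℤ)
    (z : ℂ) (hz : ‖z‖ < 1) :
    (1 - z ^ 2) / q *
        ∑ l ∈ Finset.range q, ∏ j : Fin n,
          ((1 - Complex.exp (2 * Real.pi * Complex.I / q) ^ ((l : ℤ) * s j) * z) *
            (1 - Complex.exp (2 * Real.pi * Complex.I / q) ^ (-((l : ℤ) * s j)) * z))⁻¹ =
      (∑' k : ℕ, (latticeCount n q s k : ℂ) * z ^ k) / (1 - z ^ 2) ^ (n - 1) := by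
  set ξ := Complex.exp (2 * Real.pi * Complex.I / q)
  have hξ : IsPrimitiveRoot ξ q := Complex.isPrimitiveRoot_exp q (by omega)
  have hq₀ : (q : ℂ) ≠ 0 := Nat.cast_ne_zero.mpr (by omega)
  set A := ∑ l ∈ range q, ∏ j : Fin n,
    ((1 - ξ ^ ((l : ℤ) * s j) * z) * (1 - ξ ^ (-((l : ℤ) * s j)) * z))⁻¹
  have hsum : HasSum (fun a : Fin n → ℤ =>
      (q : ℂ) * if (q : ℤ) ∣ ∑ i, a i * s i then z ^ ∑ i, (a i).natAbs else 0)
      ((1 - z ^ 2) ^ n * A) := by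
    rw [mul_sum]
    refine (hasSum_sum fun (l : ℕ) _ => hasSum_zpow_mul_sum_mul_pow_sum_natAbs
      (hξ.norm'_eq_one (by omega)) hz s (l : ℤ)).congr_fun fun a => ?_
    rw [← sum_mul, hξ.sum_range_zpow_mul]
    split_ifs <;> simp
  rw [← mul_inv_cancel_left₀ hq₀ ((1 - z ^ 2) ^ n * A)] at hsum
  rw [← ((hasSum_mul_left_iff hq₀).mp hsum).eq_tsum_latticeCount_mul_pow]
  have hz₂ : (1 : ℂ) - z ^ 2 ≠ 0 := sub_ne_zero.mpr fun h => by
    simpa [← norm_pow, ← h] using pow_lt_one₀ (norm_nonneg z) hz two_ne_zero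
  obtain ⟨m, rfl⟩ := Nat.exists_eq_add_of_le' hn
  rw [Nat.add_sub_cancel]
  field_simp
  ring

/-- The spectral generating function of the lens space `L(q; s₁, …, s_n)` equals
`θ_L(z)/(1-z²)^{n-1}`, where `θ_L(z) = ∑_{k ≥ 0} N_L(k) z^k` is the one-norm theta
function of the congruence lattice `L(q; s₁, …, s_n)`, for `|z| < 1`. -/
theorem stmt_11 (n q : ℕ) (hn : 1 ≤ n) (hq : 1 ≤ q) (s : Fin n → ℤ)
    (hs : ∀ j, IsCoprime (q : ℤ) (s j)) (z : ℂ) (hz : ‖z‖ < 1) :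
    (1 - z ^ 2) / q *
        ∑ l ∈ Finset.range q, ∏ j : Fin n,
          ((1 - Complex.exp (2 * Real.pi * Complex.I / q) ^ ((l : ℤ) * s j) * z) *
            (1 - Complex.exp (2 * Real.pi * Complex.I / q) ^ (-((l : ℤ) * s j)) * z))⁻¹ =
      (∑' k : ℕ, (latticeCount n q s k : ℂ) * z ^ k) / (1 - z ^ 2) ^ (n - 1) :=
  stmt_11_general n q hn hq s z hz
end

section
/- For n ≥ 2 and 0 ≤ p ≤ n−1, the eigenvalue families λ_{k,p} = (k+p)(k+2n−p) and λ_{k',p+1} = (k'+p+1)(k'+2n−p−1) are disjoint: λ_{k,p} ≠ λ_{k',p+1} for all nonnegative integers k, k'. -/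
/-!
Completing the square, `λ_{k,p} = (k+n)² - (n-p)²`. With `q = n-p-1`, an equality
`λ_{k,p} = λ_{k',p+1}` would give `(k+n)² = (k'+n)² + 2q + 1`, which lies strictly between
`(k'+n)²` and `(k'+n+1)²` because `q < n ≤ k'+n`.
-/

def casimirEigenvalue (n k p : ℕ) : ℕ := (k + p) * (k + 2 * n - p)

lemma casimirEigenvalue_add_sq (n k p : ℕ) (hp : p ≤ n) :
    casimirEigenvalue n k p + (n - p) ^ 2 = (k + n) ^ 2 := by
  obtain ⟨r, rfl⟩ := Nat.exists_eq_add_of_le hp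
  rw [casimirEigenvalue, show k + 2 * (p + r) - p = k + p + 2 * r by omega, Nat.add_sub_cancel_left]
  ring

lemma sq_ne_sq_add_two_mul_add_one {a b q : ℕ} (hqb : q < b) : a ^ 2 ≠ b ^ 2 + 2 * q + 1 := by
  intro h
  refine Nat.not_exists_sq (m := b) ?_ ?_ ⟨a, by rw [← sq, h]⟩ <;> nlinarith

/-- For `n ≥ 2` and `0 ≤ p ≤ n-1`, the Casimir eigenvalue families
`λ_{k,p} = (k+p)(k+2n-p)` and `λ_{k',p+1} = (k'+p+1)(k'+2n-(p+1))` are disjoint. -/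
theorem stmt_19 (n p : ℕ) (hn : 2 ≤ n) (hp : p ≤ n - 1) (k k' : ℕ) :
    (k + p) * (k + 2 * n - p) ≠ (k' + (p + 1)) * (k' + 2 * n - (p + 1)) := by
  change casimirEigenvalue n k p ≠ casimirEigenvalue n k' (p + 1)
  intro h
  have hp' : p + 1 ≤ n := by omega
  have hsq : (k + n) ^ 2 = (k' + n) ^ 2 + 2 * (n - (p + 1)) + 1 := by
    rw [← casimirEigenvalue_add_sq n k p (by omega), ← casimirEigenvalue_add_sq n k' (p + 1) hp', h,
      show n - p = n - (p + 1) + 1 by omega]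
    ring
  exact sq_ne_sq_add_two_mul_add_one (by omega) hsq
end
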